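/- Let v be a vertex with label ℓ(v) = (v_1, ..., v_t) in a DAG with ranked set L and injective ranking r. Then every vertex u ∈ D(v_t, v) \ {v_t} = (S(v_t) ∩ P(v)) \ {v_t} is unranked (u ∉ L). Moreover D(v_t, v) is exactly the set of vertices u that can reach v and satisfy ℓ(u) = ℓ(v), together with v_t itself. -/

import Mathlib

open Classical Finset
open scoped Classical

noncomputable section

variable {V : Type*}

/-- Reachability: `reach adj u v` iff there is a directed path from `u` to `v`
(including the trivial path, so `reach adj v v` always holds). -/
def reach (adj : V → V → Prop) : V → V → Prop := Relation.ReflTransGen adj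

/-- The graph has no (nontrivial) directed cycle. -/
def IsAcyclic (adj : V → V → Prop) : Prop := ∀ x, ¬ Relation.TransGen adj x x

/-- `P(v)`: the set of predecessors of `v` (vertices with a path to `v`, including `v`). -/
def predSet [Fintype V] (adj : V → V → Prop) (v : V) : Finset V :=
  Finset.univ.filter fun u => reach adj u v

/-- `S(v)`: the set of successors of `v` (vertices reachable from `v`, including `v`). -/
def succSet [Fintype V] (adj : V → V → Prop) (v : V) : Finset V :=
  Finset.univ.filter fun u => reach adj v u

/-- The element of `A` of minimum rank (an arbitrary vertex if `A = ∅`). -/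
def argminR [Nonempty V] (r : V → ℕ∞) (A : Finset V) : V :=
  if h : A.Nonempty then (Finset.exists_min_image A r h).choose else Classical.arbitrary V

/-- The sets `A_{i+1}(v)` (0-indexed: `Aset adj L r v i` is the paper's `A_{i+1}(v)`):
`A_1(v) = P(v) ∩ L`, and `A_{i+1}(v) = (S(ℓ_i(v)) ∩ P(v) ∩ L) \ {ℓ_i(v)}` where
`ℓ_i(v)` is the minimum-rank element of `A_i(v)`. -/
def Aset [Fintype V] [Nonempty V] (adj : V → V → Prop) (L : Finset V) (r : V → ℕ∞)
    (v : V) : ℕ → Finset V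
  | 0 => predSet adj v ∩ L
  | i + 1 =>
    if (Aset adj L r v i).Nonempty then
      (succSet adj (argminR r (Aset adj L r v i)) ∩ predSet adj v ∩ L).erase
        (argminR r (Aset adj L r v i))
    else ∅

/-- `ℓ_{i+1}(v)` (0-indexed). -/
def labVertex [Fintype V] [Nonempty V] (adj : V → V → Prop) (L : Finset V) (r : V → ℕ∞)
    (v : V) (i : ℕ) : V := argminR r (Aset adj L r v i)

/-- `k(v)`: the number of indices `i` with `A_{i+1}(v) ≠ ∅` (in a DAG the sets shrink,
so this is the largest `i` with `A_i(v) ≠ ∅`, in the paper's 1-indexed convention). -/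
def kOf [Fintype V] [Nonempty V] (adj : V → V → Prop) (L : Finset V) (r : V → ℕ∞) (v : V) : ℕ :=
  ((Finset.range (Fintype.card V + 1)).filter fun i => (Aset adj L r v i).Nonempty).card

/-- The label `ℓ(v) = (ℓ_1(v), …, ℓ_{k(v)}(v))`. -/
def labelSeq [Fintype V] [Nonempty V] (adj : V → V → Prop) (L : Finset V) (r : V → ℕ∞)
    (v : V) : List V :=
  (List.range (kOf adj L r v)).map (labVertex adj L r v)

/-- The rank sequence `r(ℓ(v))` with `+∞` appended. -/
def rankSeq [Fintype V] [Nonempty V] (adj : V → V → Prop) (L : Finset V) (r : V → ℕ∞)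
    (v : V) : List ℕ∞ :=
  ((labelSeq adj L r v).map r) ++ [⊤]

/-- `ℓ(u) ≺ ℓ(v)`: decreasing lexicographic order on the rank sequences with `+∞` appended. -/
def labLt [Fintype V] [Nonempty V] (adj : V → V → Prop) (L : Finset V) (r : V → ℕ∞)
    (u v : V) : Prop :=
  List.Lex (· < ·) (rankSeq adj L r v) (rankSeq adj L r u)


/-!
Let `ℓ_i` be the entries of the label of `v`, `A_i` its candidate sets and `v_t` the last entry.
For `u` with `v_t ⇝ u ⇝ v`, induction on `i` gives `A_i(u) = A_i(v) ∩ P(u)`: every `ℓ_i(v)`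
reaches `v_t` and hence `u`, so it survives the intersection, and as the rank-minimum of the
larger set (with `r` injective) it is the rank-minimum of the smaller one. Hence `u` carries the
label of `v`. Conversely, a vertex with the label of `v` has `v_t` among its predecessors.
The vertices of `D(v_t, v) \ {v_t}` are unranked because `A_{t+1}(v)` is empty.
-/

theorem lt_card_filter_range_iff {p : ℕ → Prop} [DecidablePred p] {n i : ℕ}
    (hp : ∀ {i j}, i ≤ j → p j → p i) (hn : ∀ i, p i → i < n) :
    p i ↔ i < #{j ∈ range n | p j} := by
  constructor
  · intro hi
    have hsub : range (i + 1) ⊆ {j ∈ range n | p j} := fun j hj =>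
      have hji := mem_range_succ_iff.1 hj
      mem_filter.2 ⟨mem_range.2 (hji.trans_lt (hn i hi)), hp hji hi⟩
    simpa using card_le_card hsub
  · intro hi
    by_contra hni
    have hsub : {j ∈ range n | p j} ⊆ range i := fun j hj =>
      mem_range.2 (lt_of_not_ge fun hij => hni (hp hij (mem_filter.1 hj).2))
    have := card_le_card hsub
    simp only [card_range] at this
    omega

theorem argminR_mem [Nonempty V] {r : V → ℕ∞} {A : Finset V} (h : A.Nonempty) :
    argminR r A ∈ A := by
  rw [argminR, dif_pos h]
  exact (exists_min_image A r h).choose_spec.1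

theorem argminR_le [Nonempty V] {r : V → ℕ∞} {A : Finset V} (h : A.Nonempty) {b : V}
    (hb : b ∈ A) :
    r (argminR r A) ≤ r b := by
  rw [argminR, dif_pos h]
  exact (exists_min_image A r h).choose_spec.2 b hb

theorem argminR_eq_of_subset [Nonempty V] {r : V → ℕ∞} {A B : Finset V} (hinj : Set.InjOn r B)
    (hAB : A ⊆ B) (hmem : argminR r B ∈ A) : argminR r A = argminR r B := by
  have hA : A.Nonempty := ⟨_, hmem⟩
  have hAB' : argminR r A ∈ B := hAB (argminR_mem hA)
  have hB : B.Nonempty := ⟨_, hAB'⟩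
  exact hinj hAB' (argminR_mem hB)
    ((argminR_le hA hmem).antisymm (argminR_le hB hAB'))

@[simp]
theorem mem_predSet [Fintype V] {adj : V → V → Prop} {u v : V} :
    u ∈ predSet adj v ↔ reach adj u v := by
  simp [predSet]

@[simp]
theorem mem_succSet [Fintype V] {adj : V → V → Prop} {u v : V} :
    u ∈ succSet adj v ↔ reach adj v u := by
  simp [succSet]

theorem reach_antisymm {adj : V → V → Prop} (hacyc : IsAcyclic adj) {a b : V}
    (hab : reach adj a b) (hba : reach adj b a) : a = b := by
  rcases Relation.reflTransGen_iff_eq_or_transGen.1 hab with h | h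
  · exact h.symm
  · exact absurd (h.trans_left hba) (hacyc a)

section Label

variable [Fintype V] [Nonempty V] {adj : V → V → Prop} {L : Finset V} {r : V → ℕ∞}

theorem Aset_succ_of_nonempty {v : V} {i : ℕ} (h : (Aset adj L r v i).Nonempty) :
    Aset adj L r v (i + 1) = (succSet adj (labVertex adj L r v i) ∩ predSet adj v ∩ L).erase
      (labVertex adj L r v i) := by
  rw [Aset, if_pos h]
  rfl

theorem Aset_succ_of_not_nonempty {v : V} {i : ℕ} (h : ¬(Aset adj L r v i).Nonempty) :
    Aset adj L r v (i + 1) = ∅ := by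
  rw [Aset, if_neg h]

theorem Aset_nonempty_of_succ {v : V} {i : ℕ} (h : (Aset adj L r v (i + 1)).Nonempty) :
    (Aset adj L r v i).Nonempty := by
  by_contra hi
  rw [Aset_succ_of_not_nonempty hi] at h
  exact not_nonempty_empty h

theorem Aset_nonempty_of_le {v : V} {i j : ℕ} (hij : i ≤ j)
    (h : (Aset adj L r v j).Nonempty) : (Aset adj L r v i).Nonempty := by
  induction hij with
  | refl => exact h
  | step _ ih => exact ih (Aset_nonempty_of_succ h)

theorem Aset_subset (v : V) (i : ℕ) : Aset adj L r v i ⊆ predSet adj v ∩ L := by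
  cases i with
  | zero => exact subset_rfl
  | succ i =>
    by_cases h : (Aset adj L r v i).Nonempty
    · rw [Aset_succ_of_nonempty h]
      intro w hw
      simp only [mem_erase, mem_inter] at hw ⊢
      exact ⟨hw.2.1.2, hw.2.2⟩
    · simp [Aset_succ_of_not_nonempty h]

theorem reach_of_mem_Aset {v w : V} {i : ℕ} (hw : w ∈ Aset adj L r v i) : reach adj w v :=
  mem_predSet.1 (mem_inter.1 (Aset_subset v i hw)).1

theorem labVertex_mem {v : V} {i : ℕ} (h : (Aset adj L r v i).Nonempty) :
    labVertex adj L r v i ∈ Aset adj L r v i :=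
  argminR_mem h

theorem labVertex_notMem_Aset_succ (v : V) (i : ℕ) :
    labVertex adj L r v i ∉ Aset adj L r v (i + 1) := by
  by_cases h : (Aset adj L r v i).Nonempty
  · simp [Aset_succ_of_nonempty h]
  · simp [Aset_succ_of_not_nonempty h]

theorem reach_labVertex_succ {v : V} {i : ℕ} (h : (Aset adj L r v (i + 1)).Nonempty) :
    reach adj (labVertex adj L r v i) (labVertex adj L r v (i + 1)) := by
  have hmem := labVertex_mem h
  rw [Aset_succ_of_nonempty (Aset_nonempty_of_succ h)] at hmem
  simp only [mem_erase, mem_inter, mem_succSet] at hmem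
  exact hmem.2.1.1

theorem reach_labVertex_of_le {v : V} {i j : ℕ} (hij : i ≤ j)
    (h : (Aset adj L r v j).Nonempty) :
    reach adj (labVertex adj L r v i) (labVertex adj L r v j) := by
  induction hij with
  | refl => exact Relation.ReflTransGen.refl
  | step _ ih => exact (ih (Aset_nonempty_of_succ h)).trans (reach_labVertex_succ h)

theorem labVertex_ne_of_lt (hacyc : IsAcyclic adj) {v : V} {i j : ℕ} (hij : i < j)
    (h : (Aset adj L r v j).Nonempty) : labVertex adj L r v i ≠ labVertex adj L r v j := by
  intro heq
  have hsucc : (Aset adj L r v (i + 1)).Nonempty := Aset_nonempty_of_le hij h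
  have hback : reach adj (labVertex adj L r v (i + 1)) (labVertex adj L r v i) :=
    heq ▸ reach_labVertex_of_le hij h
  have := reach_antisymm hacyc (reach_labVertex_succ hsucc) hback
  exact labVertex_notMem_Aset_succ v i (this ▸ labVertex_mem hsucc)

theorem lt_card_of_Aset_nonempty (hacyc : IsAcyclic adj) {v : V} {n : ℕ}
    (h : (Aset adj L r v n).Nonempty) : n < Fintype.card V := by
  have hinj : Set.InjOn (labVertex adj L r v) (range (n + 1) : Set ℕ) := by
    intro i hi j hj heq
    simp only [coe_range, Set.mem_Iio] at hi hj
    by_contra hne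
    rcases lt_or_gt_of_ne hne with hij | hji
    · exact labVertex_ne_of_lt hacyc hij (Aset_nonempty_of_le (by omega) h) heq
    · exact labVertex_ne_of_lt hacyc hji (Aset_nonempty_of_le (by omega) h) heq.symm
  simpa using card_le_card_of_injOn _ (fun _ _ => mem_coe.2 (mem_univ _)) hinj

theorem Aset_nonempty_iff_lt_kOf (hacyc : IsAcyclic adj) {v : V} {i : ℕ} :
    (Aset adj L r v i).Nonempty ↔ i < kOf adj L r v :=
  lt_card_filter_range_iff Aset_nonempty_of_le
    fun _ h => Nat.lt_succ_of_lt (lt_card_of_Aset_nonempty hacyc h)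

theorem reach_labVertex_last (hacyc : IsAcyclic adj) {v : V} {i : ℕ}
    (h : (Aset adj L r v i).Nonempty) :
    reach adj (labVertex adj L r v i) (labVertex adj L r v (kOf adj L r v - 1)) := by
  have hi := (Aset_nonempty_iff_lt_kOf hacyc).1 h
  exact reach_labVertex_of_le (by omega) ((Aset_nonempty_iff_lt_kOf hacyc).2 (by omega))

section Between

variable {u v : V}

theorem labVertex_eq_of_Aset_eq_inter (hinj : Set.InjOn r L) {i : ℕ}
    (hA : Aset adj L r u i = Aset adj L r v i ∩ predSet adj u)
    (hlab : (Aset adj L r v i).Nonempty → reach adj (labVertex adj L r v i) u) :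
    labVertex adj L r u i = labVertex adj L r v i := by
  by_cases hv : (Aset adj L r v i).Nonempty
  · rw [labVertex, hA]
    exact argminR_eq_of_subset
      (hinj.mono (coe_subset.2 ((Aset_subset v i).trans inter_subset_right)))
      inter_subset_left (mem_inter.2 ⟨labVertex_mem hv, mem_predSet.2 (hlab hv)⟩)
  · rw [not_nonempty_iff_eq_empty] at hv
    simp only [labVertex, hA, hv, empty_inter]

theorem Aset_eq_inter_predSet (hinj : Set.InjOn r L) (huv : reach adj u v)
    (hlab : ∀ i, (Aset adj L r v i).Nonempty → reach adj (labVertex adj L r v i) u) (i : ℕ) :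
    Aset adj L r u i = Aset adj L r v i ∩ predSet adj u := by
  induction i with
  | zero =>
    ext w
    simp only [Aset, mem_inter, mem_predSet]
    exact ⟨fun ⟨hwu, hwL⟩ => ⟨⟨hwu.trans huv, hwL⟩, hwu⟩, fun ⟨⟨_, hwL⟩, hwu⟩ => ⟨hwu, hwL⟩⟩
  | succ i ih =>
    by_cases hv : (Aset adj L r v i).Nonempty
    · have hu : (Aset adj L r u i).Nonempty :=
        ⟨_, ih ▸ mem_inter.2 ⟨labVertex_mem hv, mem_predSet.2 (hlab i hv)⟩⟩
      rw [Aset_succ_of_nonempty hu, Aset_succ_of_nonempty hv,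
        labVertex_eq_of_Aset_eq_inter hinj ih (hlab i)]
      ext w
      simp only [mem_erase, mem_inter, mem_succSet, mem_predSet]
      exact ⟨fun ⟨hne, ⟨hs, hwu⟩, hL⟩ => ⟨⟨hne, ⟨hs, hwu.trans huv⟩, hL⟩, hwu⟩,
        fun ⟨⟨hne, ⟨hs, _⟩, hL⟩, hwu⟩ => ⟨hne, ⟨hs, hwu⟩, hL⟩⟩
    · have hu : ¬(Aset adj L r u i).Nonempty := fun hu =>
        hv (hu.mono (ih ▸ inter_subset_left))
      simp only [Aset_succ_of_not_nonempty hu, Aset_succ_of_not_nonempty hv, empty_inter]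

theorem labelSeq_eq_of_between (hinj : Set.InjOn r L) (huv : reach adj u v)
    (hlab : ∀ i, (Aset adj L r v i).Nonempty → reach adj (labVertex adj L r v i) u) :
    labelSeq adj L r u = labelSeq adj L r v := by
  have hA := Aset_eq_inter_predSet hinj huv hlab
  have hne : ∀ i, (Aset adj L r u i).Nonempty ↔ (Aset adj L r v i).Nonempty := fun i =>
    ⟨fun h => h.mono (hA i ▸ inter_subset_left),
      fun h => ⟨_, hA i ▸ mem_inter.2 ⟨labVertex_mem h, mem_predSet.2 (hlab i h)⟩⟩⟩
  have hk : kOf adj L r u = kOf adj L r v := by simp only [kOf, hne]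
  have hl : labVertex adj L r u = labVertex adj L r v :=
    funext fun i => labVertex_eq_of_Aset_eq_inter hinj (hA i) (hlab i)
  rw [labelSeq, labelSeq, hk, hl]

theorem kOf_eq_of_labelSeq_eq (h : labelSeq adj L r u = labelSeq adj L r v) :
    kOf adj L r u = kOf adj L r v := by
  simpa [labelSeq] using congrArg List.length h

theorem labVertex_eq_of_labelSeq_eq (h : labelSeq adj L r u = labelSeq adj L r v) {i : ℕ}
    (hi : i < kOf adj L r v) : labVertex adj L r u i = labVertex adj L r v i := by
  simpa [labelSeq, hi, kOf_eq_of_labelSeq_eq h] using congrArg (·[i]?) h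

end Between

end Label

theorem same_label_predecessors_general [Fintype V] [Nonempty V]
    (adj : V → V → Prop) (hacyc : IsAcyclic adj)
    (L : Finset V) (r : V → ℕ∞)
    (hinj : Set.InjOn r L)
    (v : V) (hk : 0 < kOf adj L r v) :
    (∀ u ∈ (succSet adj (labVertex adj L r v (kOf adj L r v - 1)) ∩ predSet adj v).erase
        (labVertex adj L r v (kOf adj L r v - 1)), u ∉ L) ∧
    (∀ u : V,
      u ∈ succSet adj (labVertex adj L r v (kOf adj L r v - 1)) ∩ predSet adj v ↔
        ((reach adj u v ∧ labelSeq adj L r u = labelSeq adj L r v) ∨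
          u = labVertex adj L r v (kOf adj L r v - 1))) := by
  set k := kOf adj L r v
  set vt := labVertex adj L r v (k - 1)
  have hlast : (Aset adj L r v (k - 1)).Nonempty := (Aset_nonempty_iff_lt_kOf hacyc).2 (by omega)
  have hend : ¬(Aset adj L r v (k - 1 + 1)).Nonempty := fun h => by
    have := (Aset_nonempty_iff_lt_kOf hacyc).1 h
    omega
  refine ⟨fun u hu huL => hend ⟨u, ?_⟩, fun u => ⟨fun hu => ?_, ?_⟩⟩
  · rw [Aset_succ_of_nonempty hlast]
    simp only [mem_erase, mem_inter] at hu ⊢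
    exact ⟨hu.1, hu.2, huL⟩
  · simp only [mem_inter, mem_succSet, mem_predSet] at hu
    exact .inl ⟨hu.2, labelSeq_eq_of_between hinj hu.2
      fun i hi => (reach_labVertex_last hacyc hi).trans hu.1⟩
  · rintro (⟨huv, hseq⟩ | rfl)
    · have hku : k - 1 < kOf adj L r u := by rw [kOf_eq_of_labelSeq_eq hseq]; omega
      have hvt : labVertex adj L r u (k - 1) = vt :=
        labVertex_eq_of_labelSeq_eq hseq (Nat.sub_one_lt hk.ne')
      have hvt_mem : vt ∈ Aset adj L r u (k - 1) :=
        hvt ▸ labVertex_mem ((Aset_nonempty_iff_lt_kOf hacyc).2 hku)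
      exact mem_inter.2 ⟨mem_succSet.2 (reach_of_mem_Aset hvt_mem), mem_predSet.2 huv⟩
    · exact mem_inter.2
        ⟨mem_succSet.2 .refl, mem_predSet.2 (reach_of_mem_Aset (labVertex_mem hlast))⟩

/-- with `v_t` the last entry of `ℓ(v)`, every vertex of
`D(v_t, v) \ {v_t} = (S(v_t) ∩ P(v)) \ {v_t}` is unranked, and `D(v_t, v)` is exactly
the set of vertices `u` that reach `v` and have `ℓ(u) = ℓ(v)`, together with `v_t`. -/
theorem same_label_predecessors [Fintype V] [Nonempty V]
    (adj : V → V → Prop) (hacyc : IsAcyclic adj)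
    (L : Finset V) (r : V → ℕ∞)
    (hfin : ∀ w ∈ L, r w ≠ ⊤) (hpos : ∀ w ∈ L, 0 < r w)
    (hinf : ∀ w ∉ L, r w = ⊤) (hinj : Set.InjOn r L)
    (v : V) (hk : 0 < kOf adj L r v) :
    (∀ u ∈ (succSet adj (labVertex adj L r v (kOf adj L r v - 1)) ∩ predSet adj v).erase
        (labVertex adj L r v (kOf adj L r v - 1)), u ∉ L) ∧
    (∀ u : V,
      u ∈ succSet adj (labVertex adj L r v (kOf adj L r v - 1)) ∩ predSet adj v ↔
        ((reach adj u v ∧ labelSeq adj L r u = labelSeq adj L r v) ∨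
          u = labVertex adj L r v (kOf adj L r v - 1))) :=
  same_label_predecessors_general adj hacyc L r hinj v hk
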